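/- Consider a random walk on the path graph P_m with vertices a_0,...,a_m, where from a_k (0 < k < m) the walk moves to a_{k+1} with probability p_k and to a_{k−1} with probability q_k = 1 − p_k, from a_m it always moves to a_{m−1}, and a_0 is absorbing. Let τ̃ = max(1, max_k p_k/q_k). Then the hitting time from a_m to a_0 is at most F(τ̃, m) = Σ_{k=1}^m P(τ̃, k), where P(t,k) = 2Σ_{j=1}^{k−1} t^j + 1. -/
import Mathlib


/-- `P t m = 2·∑_{k=1}^{m−1} t^k + 1`. -/
noncomputable def P (t : ℝ) (m : ℕ) : ℝ := 2 * ∑ k ∈ Finset.Ico 1 m, t ^ k + 1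

/-- `F t m = ∑_{k=1}^m P t k`. -/
noncomputable def F (t : ℝ) (m : ℕ) : ℝ := ∑ k ∈ Finset.Icc 1 m, P t k

lemma P_one (t : ℝ) : P t 1 = 1 := by simp [P]

lemma P_succ (t : ℝ) (n : ℕ) (hn : 1 ≤ n) : P t (n + 1) = P t n + 2 * t ^ n := by
  unfold P
  rw [Finset.sum_Ico_succ_top hn]
  ring

lemma P_key (t : ℝ) (n : ℕ) (hn : 1 ≤ n) : P t (n + 1) = 1 + t + t * P t n := by
  induction n with
  | zero => omega
  | succ k ih =>
    rcases Nat.lt_or_ge k 1 with hk | hk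
    · have : k = 0 := by omega
      subst this
      rw [P_succ t 1 le_rfl, P_one]
      ring
    · have e1 := P_succ t (k + 1) (by omega)
      have e2 := P_succ t k hk
      have e3 := ih hk
      linear_combination e1 + e3 - t * e2

/-- For a birth–death random walk on the path `a_0, …, a_m` (moving from `a_k` to
`a_{k+1}` with probability `p_k` and to `a_{k−1}` with probability `1 − p_k` for
`0 < k < m`, always moving from `a_m` to `a_{m−1}`, `a_0` absorbing), if
`τ̃ ≥ max(1, max_k p_k/(1−p_k))` then the hitting time `h m` from `a_m` to `a_0`
satisfies `h m ≤ F τ̃ m`. -/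
theorem path_asymmetric_hitting_le (m : ℕ) (hm : 0 < m)
    (p : ℕ → ℝ) (hp : ∀ k, 0 < k → k < m → 0 < p k ∧ p k < 1)
    (h : ℕ → ℝ) (h0 : h 0 = 0) (hend : h m = 1 + h (m - 1))
    (hmid : ∀ k, 0 < k → k < m →
      h k = 1 + p k * h (k + 1) + (1 - p k) * h (k - 1))
    (τ : ℝ) (hτ1 : 1 ≤ τ) (hτ : ∀ k, 0 < k → k < m → p k / (1 - p k) ≤ τ) :
    h m ≤ F τ m := by
  -- key inductive bound on the increments
  have key : ∀ j k, k + j = m → 1 ≤ k →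
      0 ≤ h k - h (k - 1) ∧ h k - h (k - 1) ≤ P τ (j + 1) := by
    intro j
    induction j with
    | zero =>
      intro k hk hk1
      have hkm : k = m := by omega
      subst hkm
      rw [P_one, hend]
      constructor <;> linarith
    | succ j ih =>
      intro k hk hk1
      have hkm : k < m := by omega
      obtain ⟨hp0, hp1⟩ := hp k hk1 hkm
      have hq : 0 < 1 - p k := by linarith
      have hrec := hmid k hk1 hkm
      obtain ⟨ih0, ih1⟩ := ih (k + 1) (by omega) (by omega)
      simp only [Nat.add_sub_cancel] at ih0 ih1
      have hτk : p k ≤ τ * (1 - p k) := by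
        have := hτ k hk1 hkm
        rw [div_le_iff₀ hq] at this
        linarith
      have hd : (1 - p k) * (h k - h (k - 1)) = 1 + p k * (h (k + 1) - h k) := by
        linear_combination hrec
      have hPnn : (0 : ℝ) ≤ P τ (j + 1) := le_trans ih0 ih1
      constructor
      · have hpos : 0 ≤ 1 + p k * (h (k + 1) - h k) := by
          nlinarith [mul_nonneg hp0.le ih0]
        nlinarith [hd]
      · rw [P_key τ (j + 1) (by omega)]
        have h1 : (1 - p k) * (h k - h (k - 1)) ≤
            (1 - p k) * (1 + τ + τ * P τ (j + 1)) := by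
          rw [hd]
          nlinarith [mul_nonneg hp0.le (sub_nonneg.2 ih1),
            mul_nonneg (by linarith : (0:ℝ) ≤ τ * (1 - p k) - p k) hPnn]
        exact le_of_mul_le_mul_left h1 hq
  -- telescope
  have tele : ∑ i ∈ Finset.range m, (h (i + 1) - h i) = h m := by
    rw [Finset.sum_range_sub, h0, sub_zero]
  have hbound : h m ≤ ∑ i ∈ Finset.range m, P τ (m - i) := by
    rw [← tele]
    apply Finset.sum_le_sum
    intro i hi
    have him : i < m := Finset.mem_range.mp hi
    obtain ⟨_, hb⟩ := key (m - i - 1) (i + 1) (by omega) (by omega)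
    simp only [Nat.add_sub_cancel] at hb
    have : m - i - 1 + 1 = m - i := by omega
    rwa [this] at hb
  have hrefl : ∑ i ∈ Finset.range m, P τ (m - i) = ∑ i ∈ Finset.range m, P τ (1 + i) := by
    rw [← Finset.sum_range_reflect (fun i => P τ (1 + i)) m]
    apply Finset.sum_congr rfl
    intro j hj
    have hj' : j < m := Finset.mem_range.mp hj
    congr 1
    omega
  have hF : F τ m = ∑ i ∈ Finset.range m, P τ (1 + i) := by
    unfold F
    rw [show Finset.Icc 1 m = Finset.Ico 1 (m + 1) by rfl, Finset.sum_Ico_eq_sum_range]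
    simp
  calc h m ≤ ∑ i ∈ Finset.range m, P τ (m - i) := hbound
    _ = ∑ i ∈ Finset.range m, P τ (1 + i) := hrefl
    _ = F τ m := hF.symm
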